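/- Let r : L → L be the ℤ-linear map determined on the basis by r(H₁) = H₁, r(H₂) = 4H₁ + H₂ − E₁ − ⋯ − E₈, and r(E_i) = H₁ − E_i for i = 1, …, 8 (the Picard action of the involution r of the paper). Let T be the Kac translation T_α with α = E₁ − E₂ (the translation sending E₂ to E₁), and set λ = 3H₁ + 2H₂ − 2E₁ − E₃ − E₄ − ⋯ − E₈. Then r(δ) = δ and r(T(λ)) = λ. -/

import Mathlib

/-!
For the root `α = E₁ − E₂` we have `⟨α,α⟩ = −2`, so the Kac translation is
`T_α(β) = β + ⟨δ,β⟩α − (⟨α,β⟩ − ⟨δ,β⟩)δ`. Since `⟨δ,λ⟩ = ⟨α,λ⟩ = 2`, the `δ`-term vanishes and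
`T(λ) = λ + 2α` is `λ` with `E₁` and `E₂` exchanged. Both identities then follow from the
linearity of `r` and its values on the basis.
-/

noncomputable section

/-- The class `H₁`. -/
def H1 : Fin 10 → ℤ := Pi.single 0 1

/-- The class `H₂`. -/
def H2 : Fin 10 → ℤ := Pi.single 1 1

/-- `Ee j` is the class `E_{j+1}` of the `(j+1)`-st exceptional divisor. -/
def Ee (j : Fin 8) : Fin 10 → ℤ := Pi.single j.succ.succ 1

/-- The intersection form: `⟨H₁,H₂⟩ = ⟨H₂,H₁⟩ = 1`, `⟨E_j,E_j⟩ = −1`, all other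
pairings of basis elements zero. -/
def pform (β γ : Fin 10 → ℤ) : ℤ :=
  β 0 * γ 1 + β 1 * γ 0 - ∑ j : Fin 8, β j.succ.succ * γ j.succ.succ

/-- The null root `δ = 2H₁ + 2H₂ − E₁ − ⋯ − E₈`. -/
def pdelta : Fin 10 → ℤ := 2 • H1 + 2 • H2 - ∑ j : Fin 8, Ee j

/-- The Kac translation `T_α(β) = β + ⟨δ,β⟩α − (⟨δ,β⟩⟨α,α⟩/2 + ⟨α,β⟩)δ`. -/
def Tkac (α β : Fin 10 → ℤ) : Fin 10 → ℤ :=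
  β + pform pdelta β • α - (pform pdelta β * pform α α / 2 + pform α β) • pdelta

/-- The Picard action of the involution `r`: `r(H₁) = H₁`,
`r(H₂) = 4H₁ + H₂ − E₁ − ⋯ − E₈`, `r(E_i) = H₁ − E_i`, extended `ℤ`-linearly. -/
def rmap (β : Fin 10 → ℤ) : Fin 10 → ℤ :=
  β 0 • H1 + β 1 • (4 • H1 + H2 - ∑ j : Fin 8, Ee j)
    + ∑ j : Fin 8, β j.succ.succ • (H1 - Ee j)

def rmapₗ : (Fin 10 → ℤ) →ₗ[ℤ] Fin 10 → ℤ where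
  toFun := rmap
  map_add' β γ := by
    simp only [rmap, Pi.add_apply, add_smul, Finset.sum_add_distrib]
    abel
  map_smul' c β := by
    simp only [rmap, Pi.smul_apply, smul_eq_mul, mul_smul, smul_add, Finset.smul_sum,
      RingHom.id_apply]

@[simp] lemma rmapₗ_apply (β : Fin 10 → ℤ) : rmapₗ β = rmap β := rfl

lemma rmap_H1 : rmap H1 = H1 := by
  simp [rmap, H1, Fin.succ_ne_zero]

lemma rmap_H2 : rmap H2 = 4 • H1 + H2 - ∑ j : Fin 8, Ee j := by
  simp [rmap, H2, Fin.succ_succ_ne_one]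

lemma rmap_Ee (i : Fin 8) : rmap (Ee i) = H1 - Ee i := by
  simp [rmap, Ee, Pi.single_apply, Fin.succ_ne_zero, Fin.succ_succ_ne_one]

lemma rmap_pdelta : rmap pdelta = pdelta := by
  rw [pdelta, ← rmapₗ_apply]
  simp only [map_sub, map_add, map_nsmul, map_sum, rmapₗ_apply, rmap_H1, rmap_H2, rmap_Ee,
    Finset.sum_sub_distrib, Finset.sum_const, Finset.card_univ, Fintype.card_fin]
  abel

lemma Tkac_of_pform_self_eq_neg_two {α : Fin 10 → ℤ} (hα : pform α α = -2) (β : Fin 10 → ℤ) :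
    Tkac α β = β + pform pdelta β • α - (pform α β - pform pdelta β) • pdelta := by
  rw [Tkac, hα, mul_neg, ← neg_mul, Int.mul_ediv_cancel _ two_ne_zero, neg_add_eq_sub]

def lambdaClass : Fin 10 → ℤ :=
  3 • H1 + 2 • H2 - 2 • Ee 0 - (Ee 2 + Ee 3 + Ee 4 + Ee 5 + Ee 6 + Ee 7)

lemma Tkac_lambdaClass :
    Tkac (Ee 0 - Ee 1) lambdaClass = lambdaClass + 2 • (Ee 0 - Ee 1) := by
  have hα : pform (Ee 0 - Ee 1) (Ee 0 - Ee 1) = -2 := by decide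
  have hδ : pform pdelta lambdaClass = 2 := by decide
  have hαlam : pform (Ee 0 - Ee 1) lambdaClass = 2 := by decide
  rw [Tkac_of_pform_self_eq_neg_two hα, hδ, hαlam, sub_self, zero_smul, sub_zero,
    ofNat_smul_eq_nsmul ℤ]

lemma rmap_Tkac_lambdaClass : rmap (Tkac (Ee 0 - Ee 1) lambdaClass) = lambdaClass := by
  rw [Tkac_lambdaClass, lambdaClass, ← rmapₗ_apply]
  simp only [map_sub, map_add, map_nsmul, rmapₗ_apply, rmap_H1, rmap_H2, rmap_Ee,
    Fin.sum_univ_eight]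
  abel

/-- `r(δ) = δ` and `r(T(λ)) = λ`, where `T = T_{E₁−E₂}` and
`λ = 3H₁ + 2H₂ − 2E₁ − E₃ − E₄ − ⋯ − E₈`. -/
theorem r_T_lambda :
    rmap pdelta = pdelta ∧
    rmap (Tkac (Ee 0 - Ee 1)
        (3 • H1 + 2 • H2 - 2 • Ee 0 - (Ee 2 + Ee 3 + Ee 4 + Ee 5 + Ee 6 + Ee 7)))
      = 3 • H1 + 2 • H2 - 2 • Ee 0 - (Ee 2 + Ee 3 + Ee 4 + Ee 5 + Ee 6 + Ee 7) :=
  ⟨rmap_pdelta, rmap_Tkac_lambdaClass⟩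

end
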